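/- arXiv:1702.07669 — 4 statements merged into one kernel-verified Lean document; each statement's English description precedes it below -/
import Mathlib

section
/- For integers x, y, z (with binary representations of the same length after padding), x + y > z if and only if either (1) there exists k such that pre_k(x) + pre_k(y) = pre_k(z) + 1, or (2) there exists k such that pre_{k+1}(x) = 2·pre_k(x) + 1, pre_{k+1}(y) = 2·pre_k(y) + 1, pre_{k+1}(z) = 2·pre_k(z), and pre_k(z) = pre_k(x) + pre_k(y). Here pre_k(x) denotes the integer formed by the k most significant bits of x. -/
/-!
Compare the prefix sums `pre_k x + pre_k y` with `pre_k z` level by level. If the sum exceeds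
`pre_k z` at some level, then `x + y > z`, since `x + y` is at least `2^(L-k)` times the prefix
sum while `z` stays below `2^(L-k) (pre_k z + 1)`. Conversely, as long as neither condition
holds the prefix sum never exceeds `pre_k z`: the difference starts at `0` for `k = 0`, doubles
at each level and then changes by the new bits, which can raise it by at most `2`. A deficit of
at least `1` therefore stays `≤ 0`, and from a difference of `0` the only ways up are `+1`
(condition (1)) and `+2` (two `1`-bits over a `0`-bit, condition (2)). At `k = L` this gives
`x + y ≤ z`.
-/

/-- `pre L k x` is the integer given by the `k` most significant bits of `x`,
viewed as an `L`-bit number. -/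
def pre (L k x : ℕ) : ℕ := x / 2 ^ (L - k)

lemma Nat.lt_add_of_div_lt_add_div {x y z d : ℕ} (h : z / d < x / d + y / d) : z < x + y := by
  have hd : 0 < d := Nat.pos_of_ne_zero fun hd => by simp [hd] at h
  calc z < (x / d + y / d) * d := (Nat.div_lt_iff_lt_mul hd).1 h
    _ = x / d * d + y / d * d := add_mul _ _ _
    _ ≤ x + y := add_le_add (Nat.div_mul_le_self x d) (Nat.div_mul_le_self y d)

namespace pre

variable {L k x : ℕ}

lemma zero_of_lt (hx : x < 2 ^ L) : pre L 0 x = 0 :=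
  Nat.div_eq_of_lt hx

@[simp] lemma self : pre L L x = x := by simp [pre]

lemma two_mul_add_mod_two (hk : k + 1 ≤ L) :
    2 * pre L k x + pre L (k + 1) x % 2 = pre L (k + 1) x := by
  have hdiv : pre L k x = pre L (k + 1) x / 2 := by
    rw [pre, pre, Nat.div_div_eq_div_mul, ← pow_succ]
    congr 2
    omega
  rw [hdiv]
  exact Nat.div_add_mod _ 2

lemma lt_add_of_lt {y z : ℕ} (h : pre L k z < pre L k x + pre L k y) : z < x + y :=
  Nat.lt_add_of_div_lt_add_div h

end pre

lemma pre_add_pre_le_pre {L x y z : ℕ} (hx : x < 2 ^ L) (hy : y < 2 ^ L) (hz : z < 2 ^ L)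
    (hcarry : ∀ k ≤ L, pre L k x + pre L k y ≠ pre L k z + 1)
    (hgenerate : ∀ k, k + 1 ≤ L → pre L (k + 1) x = 2 * pre L k x + 1 →
      pre L (k + 1) y = 2 * pre L k y + 1 → pre L (k + 1) z = 2 * pre L k z →
      pre L k z ≠ pre L k x + pre L k y) :
    ∀ k ≤ L, pre L k x + pre L k y ≤ pre L k z := by
  intro k
  induction k with
  | zero => simp [pre.zero_of_lt, hx, hy, hz]
  | succ k ih =>
    intro hk
    have hle := ih (by omega)
    have hx' := pre.two_mul_add_mod_two (x := x) hk
    have hy' := pre.two_mul_add_mod_two (x := y) hk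
    have hz' := pre.two_mul_add_mod_two (x := z) hk
    have hcarry' := hcarry (k + 1) hk
    have hgenerate' := hgenerate k hk
    omega

theorem stmt_0 (L x y z : ℕ) (hx : x < 2 ^ L) (hy : y < 2 ^ L) (hz : z < 2 ^ L) :
    x + y > z ↔
      (∃ k ≤ L, pre L k x + pre L k y = pre L k z + 1) ∨
      (∃ k, k + 1 ≤ L ∧
        pre L (k + 1) x = 2 * pre L k x + 1 ∧
        pre L (k + 1) y = 2 * pre L k y + 1 ∧
        pre L (k + 1) z = 2 * pre L k z ∧
        pre L k z = pre L k x + pre L k y) := by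
  constructor
  · intro hlt
    by_contra! hnone
    have := pre_add_pre_le_pre hx hy hz hnone.1 hnone.2 L le_rfl
    simp only [pre.self] at this
    omega
  · rintro (⟨k, -, hk⟩ | ⟨k, -, hkx, hky, hkz, hk⟩)
    · exact pre.lt_add_of_lt (L := L) (k := k) (by omega)
    · exact pre.lt_add_of_lt (L := L) (k := k + 1) (by omega)
end

section
/- Let a, b, c : Fin n → ℤ be nonnegative monotone nondecreasing sequences, and let K be at least the maximum value occurring in any of them. Define e : Fin 4n → ℤ by e[i] = 0, e[n+i] = K + a[i], e[2n+i] = 4K + b[i], e[3n+i] = 5K + c[i] for i ∈ [0, n-1]. Then e is superadditive if and only if a[i] + b[j] ≤ c[i+j] for all i, j with i + j < n. -/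
set_option maxHeartbeats 1000000 in
theorem stmt_4 (n : ℕ) (hn : 0 < n) (a b c : Fin n → ℤ) (K : ℤ)
    (hna : ∀ i, 0 ≤ a i) (hnb : ∀ i, 0 ≤ b i) (hnc : ∀ i, 0 ≤ c i)
    (hma : Monotone a) (hmb : Monotone b) (hmc : Monotone c)
    (hKa : ∀ i, a i ≤ K) (hKb : ∀ i, b i ≤ K) (hKc : ∀ i, c i ≤ K)
    (e : Fin (4 * n) → ℤ)
    (he0 : ∀ i : Fin n, e ⟨(i : ℕ), by have := i.isLt; omega⟩ = 0)
    (he1 : ∀ i : Fin n, e ⟨n + (i : ℕ), by have := i.isLt; omega⟩ = K + a i)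
    (he2 : ∀ i : Fin n, e ⟨2 * n + (i : ℕ), by have := i.isLt; omega⟩ = 4 * K + b i)
    (he3 : ∀ i : Fin n, e ⟨3 * n + (i : ℕ), by have := i.isLt; omega⟩ = 5 * K + c i) :
    (∀ (p q : Fin (4 * n)) (h : (p : ℕ) + (q : ℕ) < 4 * n),
        e p + e q ≤ e ⟨(p : ℕ) + (q : ℕ), h⟩) ↔
      (∀ (i j : Fin n) (h : (i : ℕ) + (j : ℕ) < n),
        a i + b j ≤ c ⟨(i : ℕ) + (j : ℕ), h⟩) := by
  have hK0 : 0 ≤ K := le_trans (hna ⟨0, hn⟩) (hKa ⟨0, hn⟩)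
  constructor
  · intro H i j h
    have hi := i.isLt
    have hj := j.isLt
    have hsum : (n + (i : ℕ)) + (2 * n + (j : ℕ)) < 4 * n := by omega
    have key := H ⟨n + (i : ℕ), by omega⟩ ⟨2 * n + (j : ℕ), by omega⟩ hsum
    have e1 := he1 i
    have e2 := he2 j
    have e3 := he3 ⟨(i : ℕ) + (j : ℕ), h⟩
    have hidx : (⟨(n + (i : ℕ)) + (2 * n + (j : ℕ)), hsum⟩ : Fin (4 * n))
        = ⟨3 * n + ((i : ℕ) + (j : ℕ)), by omega⟩ := by ext; simp; omega
    rw [hidx] at key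
    rw [e1, e2, e3] at key
    linarith
  · intro H p q h
    obtain ⟨pv, hp⟩ := p
    obtain ⟨qv, hq⟩ := q
    simp only at h ⊢
    have E0 : ∀ (m : ℕ) (hm : m < 4 * n) (h1 : m < n), e ⟨m, hm⟩ = 0 :=
      fun m hm h1 => he0 ⟨m, h1⟩
    have E1 : ∀ (m : ℕ) (hm : m < 4 * n) (h1 : n ≤ m) (h2 : m < 2 * n),
        e ⟨m, hm⟩ = K + a ⟨m - n, by omega⟩ := by
      intro m hm h1 h2
      have hidx : (⟨m, hm⟩ : Fin (4 * n)) = ⟨n + (m - n), by omega⟩ := by ext; simp; omega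
      rw [hidx]; exact he1 ⟨m - n, by omega⟩
    have E2 : ∀ (m : ℕ) (hm : m < 4 * n) (h1 : 2 * n ≤ m) (h2 : m < 3 * n),
        e ⟨m, hm⟩ = 4 * K + b ⟨m - 2 * n, by omega⟩ := by
      intro m hm h1 h2
      have hidx : (⟨m, hm⟩ : Fin (4 * n)) = ⟨2 * n + (m - 2 * n), by omega⟩ := by ext; simp; omega
      rw [hidx]; exact he2 ⟨m - 2 * n, by omega⟩
    have E3 : ∀ (m : ℕ) (hm : m < 4 * n) (h1 : 3 * n ≤ m),
        e ⟨m, hm⟩ = 5 * K + c ⟨m - 3 * n, by omega⟩ := by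
      intro m hm h1
      have hidx : (⟨m, hm⟩ : Fin (4 * n)) = ⟨3 * n + (m - 3 * n), by omega⟩ := by ext; simp; omega
      rw [hidx]; exact he3 ⟨m - 3 * n, by omega⟩
    obtain hA | ⟨hA, hA'⟩ | ⟨hA, hA'⟩ | hA :
        pv < n ∨ (n ≤ pv ∧ pv < 2 * n) ∨ (2 * n ≤ pv ∧ pv < 3 * n) ∨ 3 * n ≤ pv := by omega
    all_goals obtain hB | ⟨hB, hB'⟩ | ⟨hB, hB'⟩ | hB :
        qv < n ∨ (n ≤ qv ∧ qv < 2 * n) ∨ (2 * n ≤ qv ∧ qv < 3 * n) ∨ 3 * n ≤ qv := by omega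
    -- (0,0)
    · rw [E0 pv hp hA, E0 qv hq hB]
      rcases lt_or_ge (pv + qv) n with hs | hs
      · rw [E0 _ h hs]; norm_num
      · rw [E1 _ h hs (by omega)]
        linarith [hna ⟨pv + qv - n, by omega⟩]
    -- (0,1)
    · rw [E0 pv hp hA, E1 qv hq hB hB']
      rcases lt_or_ge (pv + qv) (2 * n) with hs | hs
      · rw [E1 _ h (by omega) hs]
        have := hma (show (⟨qv - n, by omega⟩ : Fin n) ≤ ⟨pv + qv - n, by omega⟩ from by
          simp [Fin.le_def]; omega)
        linarith
      · rw [E2 _ h hs (by omega)]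
        linarith [hKa ⟨qv - n, by omega⟩, hnb ⟨pv + qv - 2 * n, by omega⟩]
    -- (0,2)
    · rw [E0 pv hp hA, E2 qv hq hB hB']
      rcases lt_or_ge (pv + qv) (3 * n) with hs | hs
      · rw [E2 _ h (by omega) hs]
        have := hmb (show (⟨qv - 2 * n, by omega⟩ : Fin n) ≤ ⟨pv + qv - 2 * n, by omega⟩ from by
          simp [Fin.le_def]; omega)
        linarith
      · rw [E3 _ h hs]
        linarith [hKb ⟨qv - 2 * n, by omega⟩, hnc ⟨pv + qv - 3 * n, by omega⟩]
    -- (0,3)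
    · rw [E0 pv hp hA, E3 qv hq hB, E3 _ h (by omega)]
      have := hmc (show (⟨qv - 3 * n, by omega⟩ : Fin n) ≤ ⟨pv + qv - 3 * n, by omega⟩ from by
        simp [Fin.le_def]; omega)
      linarith
    -- (1,0)
    · rw [E1 pv hp hA hA', E0 qv hq hB]
      rcases lt_or_ge (pv + qv) (2 * n) with hs | hs
      · rw [E1 _ h (by omega) hs]
        have := hma (show (⟨pv - n, by omega⟩ : Fin n) ≤ ⟨pv + qv - n, by omega⟩ from by
          simp [Fin.le_def]; omega)
        linarith
      · rw [E2 _ h hs (by omega)]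
        linarith [hKa ⟨pv - n, by omega⟩, hnb ⟨pv + qv - 2 * n, by omega⟩]
    -- (1,1)
    · rw [E1 pv hp hA hA', E1 qv hq hB hB']
      rcases lt_or_ge (pv + qv) (3 * n) with hs | hs
      · rw [E2 _ h (by omega) hs]
        linarith [hKa ⟨pv - n, by omega⟩, hKa ⟨qv - n, by omega⟩,
          hnb ⟨pv + qv - 2 * n, by omega⟩]
      · rw [E3 _ h hs]
        linarith [hKa ⟨pv - n, by omega⟩, hKa ⟨qv - n, by omega⟩,
          hnc ⟨pv + qv - 3 * n, by omega⟩]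
    -- (1,2)
    · rw [E1 pv hp hA hA', E2 qv hq hB hB', E3 _ h (by omega)]
      have hc : a ⟨pv - n, by omega⟩ + b ⟨qv - 2 * n, by omega⟩
          ≤ c ⟨pv + qv - 3 * n, by omega⟩ := by
        have := H ⟨pv - n, by omega⟩ ⟨qv - 2 * n, by omega⟩ (by simp; omega)
        convert this using 2
        simp; omega
      linarith
    -- (1,3)
    · exact absurd h (by omega)
    -- (2,0)
    · rw [E2 pv hp hA hA', E0 qv hq hB]
      rcases lt_or_ge (pv + qv) (3 * n) with hs | hs
      · rw [E2 _ h (by omega) hs]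
        have := hmb (show (⟨pv - 2 * n, by omega⟩ : Fin n) ≤ ⟨pv + qv - 2 * n, by omega⟩ from by
          simp [Fin.le_def]; omega)
        linarith
      · rw [E3 _ h hs]
        linarith [hKb ⟨pv - 2 * n, by omega⟩, hnc ⟨pv + qv - 3 * n, by omega⟩]
    -- (2,1)
    · rw [E2 pv hp hA hA', E1 qv hq hB hB', E3 _ h (by omega)]
      have hc : a ⟨qv - n, by omega⟩ + b ⟨pv - 2 * n, by omega⟩
          ≤ c ⟨pv + qv - 3 * n, by omega⟩ := by
        have := H ⟨qv - n, by omega⟩ ⟨pv - 2 * n, by omega⟩ (by simp; omega)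
        convert this using 2
        simp; omega
      linarith
    -- (2,2)
    · exact absurd h (by omega)
    -- (2,3)
    · exact absurd h (by omega)
    -- (3,0)
    · rw [E3 pv hp hA, E0 qv hq hB, E3 _ h (by omega)]
      have := hmc (show (⟨pv - 3 * n, by omega⟩ : Fin n) ≤ ⟨pv + qv - 3 * n, by omega⟩ from by
        simp [Fin.le_def]; omega)
      linarith
    -- (3,1)
    · exact absurd h (by omega)
    -- (3,2)
    · exact absurd h (by omega)
    -- (3,3)
    · exact absurd h (by omega)
end

section
/- Let a : Fin n → ℤ, and define sequences b, c of length 2n by b[k] = Σ_{i=0}^{k} a[i] for k < n, c[k] = -Σ_{i=0}^{n-k-1} a[i] for k ≤ n (empty sum is 0), and b[k] = c[k] = -D otherwise, where D is more than twice the absolute value of any partial sum of a. Then for each 1 ≤ k ≤ n, the (n+k-1)-th entry of the max-plus convolution of b and c equals the maximum over all windows of length k of the sum of k consecutive elements of a, i.e., max_{k-1 ≤ j < n} Σ_{i=j-k+1}^{j} a[i]. -/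
/-!
With `S m = ∑ i < m, a i`, an entry `b i + c j` with `i + j = n + k - 1`, `i < n` and `j ≤ n` is
`S (i + 1) - S (i + 1 - k)`, the window of length `k` ending at `i`; these are exactly the windows.
Every other entry uses one padding value `-D`, and `2 |S m| < D` forces it below the first window
`S k`, so it never attains the maximum.
-/

open Finset

theorem Finset.sum_Icc_eq_sum_range_sub {G : Type*} [AddCommGroup G] (a : ℕ → G) (j k : ℕ) :
    ∑ i ∈ Icc (j + 1 - k) j, a i = ∑ i ∈ range (j + 1), a i - ∑ i ∈ range (j + 1 - k), a i := by
  rw [← Ico_add_one_right_eq_Icc, sum_Ico_eq_sub _ (Nat.sub_le _ _)]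

theorem sum_Icc_pred_eq_sum_range {G : Type*} [AddCommGroup G] (a : ℕ → G) {k : ℕ}
    (hk : 1 ≤ k) : ∑ i ∈ Icc (k - 1 + 1 - k) (k - 1), a i = ∑ i ∈ range k, a i := by
  rw [sum_Icc_eq_sum_range_sub, Nat.sub_add_cancel hk, Nat.sub_self, range_zero, sum_empty,
    sub_zero]

theorem sub_lt_of_two_mul_abs_lt {x y D : ℤ} (hx : 2 * |x| < D) (hy : 2 * |y| < D) :
    x - D < y := by
  linarith [le_abs_self x, neg_abs_le y]

section MaxPlus

variable {n k : ℕ} {a b c : ℕ → ℤ}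

theorem add_eq_sum_Icc_of_lt_of_le
    (hb1 : ∀ k < n, b k = ∑ i ∈ range (k + 1), a i)
    (hc1 : ∀ k ≤ n, c k = -∑ i ∈ range (n - k), a i)
    (hk : 1 ≤ k) {i j : ℕ} (hi : i < n) (hj : j ≤ n) (hij : i + j = n + k - 1) :
    b i + c j = ∑ m ∈ Icc (i + 1 - k) i, a m := by
  rw [hb1 i hi, hc1 j hj, sum_Icc_eq_sum_range_sub, show n - j = i + 1 - k by omega,
    sub_eq_add_neg]

theorem exists_sum_Icc_ge_add {D : ℤ}
    (hD : ∀ k ≤ n, 2 * |∑ i ∈ range k, a i| < D)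
    (hb1 : ∀ k < n, b k = ∑ i ∈ range (k + 1), a i)
    (hb2 : ∀ k, n ≤ k → k < 2 * n → b k = -D)
    (hc1 : ∀ k ≤ n, c k = -∑ i ∈ range (n - k), a i)
    (hc2 : ∀ k, n < k → k < 2 * n → c k = -D)
    (hk : 1 ≤ k) (hkn : k ≤ n) {i j : ℕ} (hi : i < 2 * n) (hj : j < 2 * n)
    (hij : i + j = n + k - 1) :
    ∃ m, k - 1 ≤ m ∧ m < n ∧ b i + c j ≤ ∑ l ∈ Icc (m + 1 - k) m, a l := by
  have hSk := hD k hkn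
  rcases lt_or_ge i n with hin | hin
  · rcases le_or_gt j n with hjn | hjn
    · exact ⟨i, by omega, hin, (add_eq_sum_Icc_of_lt_of_le hb1 hc1 hk hin hjn hij).le⟩
    · refine ⟨k - 1, le_rfl, by omega, ?_⟩
      rw [sum_Icc_pred_eq_sum_range a hk, hb1 i hin, hc2 j hjn hj, ← sub_eq_add_neg]
      exact (sub_lt_of_two_mul_abs_lt (hD (i + 1) (by omega)) hSk).le
  · refine ⟨k - 1, le_rfl, by omega, ?_⟩
    rw [sum_Icc_pred_eq_sum_range a hk, hb2 i hin hi, hc1 j (by omega), add_comm,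
      ← sub_eq_add_neg]
    exact (sub_lt_of_two_mul_abs_lt (abs_neg (∑ l ∈ range (n - j), a l) ▸
      hD (n - j) (by omega)) hSk).le

end MaxPlus

theorem stmt_8_general (n : ℕ) (a b c : ℕ → ℤ) (D : ℤ)
    (hD : ∀ k ≤ n, 2 * |∑ i ∈ Finset.range k, a i| < D)
    (hb1 : ∀ k < n, b k = ∑ i ∈ Finset.range (k + 1), a i)
    (hb2 : ∀ k, n ≤ k → k < 2 * n → b k = -D)
    (hc1 : ∀ k ≤ n, c k = -∑ i ∈ Finset.range (n - k), a i)
    (hc2 : ∀ k, n < k → k < 2 * n → c k = -D) :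
    ∀ k, 1 ≤ k → k ≤ n →
      ∃ M : ℤ,
        IsGreatest {s : ℤ | ∃ i j : ℕ, i < 2 * n ∧ j < 2 * n ∧
          i + j = n + k - 1 ∧ s = b i + c j} M ∧
        IsGreatest {s : ℤ | ∃ j : ℕ, k - 1 ≤ j ∧ j < n ∧
          s = ∑ i ∈ Finset.Icc (j + 1 - k) j, a i} M := by
  intro k hk hkn
  obtain ⟨j₀, hj₀, hmax⟩ := exists_max_image (Ico (k - 1) n)
    (fun m => ∑ l ∈ Icc (m + 1 - k) m, a l) ⟨k - 1, mem_Ico.2 ⟨le_rfl, by omega⟩⟩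
  rw [mem_Ico] at hj₀
  refine ⟨_, ⟨⟨j₀, n + k - 1 - j₀, by omega, by omega, by omega, ?_⟩, ?_⟩,
    ⟨⟨j₀, hj₀.1, hj₀.2, rfl⟩, ?_⟩⟩
  · exact (add_eq_sum_Icc_of_lt_of_le hb1 hc1 hk hj₀.2 (by omega) (by omega)).symm
  · rintro _ ⟨i, j, hi, hj, hij, rfl⟩
    obtain ⟨m, hm₁, hm₂, hle⟩ := exists_sum_Icc_ge_add hD hb1 hb2 hc1 hc2 hk hkn hi hj hij
    exact hle.trans (hmax m (mem_Ico.2 ⟨hm₁, hm₂⟩))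
  · rintro _ ⟨m, hm₁, hm₂, rfl⟩
    exact hmax m (mem_Ico.2 ⟨hm₁, hm₂⟩)

theorem stmt_8 (n : ℕ) (hn : 0 < n) (a b c : ℕ → ℤ) (D : ℤ)
    (hD : ∀ k ≤ n, 2 * |∑ i ∈ Finset.range k, a i| < D)
    (hb1 : ∀ k < n, b k = ∑ i ∈ Finset.range (k + 1), a i)
    (hb2 : ∀ k, n ≤ k → k < 2 * n → b k = -D)
    (hc1 : ∀ k ≤ n, c k = -∑ i ∈ Finset.range (n - k), a i)
    (hc2 : ∀ k, n < k → k < 2 * n → c k = -D) :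
    ∀ k, 1 ≤ k → k ≤ n →
      ∃ M : ℤ,
        IsGreatest {s : ℤ | ∃ i j : ℕ, i < 2 * n ∧ j < 2 * n ∧
          i + j = n + k - 1 ∧ s = b i + c j} M ∧
        IsGreatest {s : ℤ | ∃ j : ℕ, k - 1 ≤ j ∧ j < n ∧
          s = ∑ i ∈ Finset.Icc (j + 1 - k) j, a i} M :=
  stmt_8_general n a b c D hD hb1 hb2 hc1 hc2
end

section
/- Let g : ℕ → ℝ≥0 be superadditive (g(x+y) ≥ g(x) + g(y)) with g(m) ≥ 1 for m ≥ 1, and let f : ℕ × ℕ → ℝ≥0 satisfy f(1, m) ≤ g(m) and f(n, m) ≤ max over m₁ + m₂ = m of [f(n/2, m₁) + f(n/2, m₂) + g(m)] for n a power of 2. Then f(n, m) ≤ g(m) · (1 + log₂ n) for all powers of two n and all m. -/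
open NNReal

theorem stmt_9 (g : ℕ → ℝ≥0) (hsuper : ∀ x y, g x + g y ≤ g (x + y))
    (hg : ∀ m, 1 ≤ m → 1 ≤ g m)
    (f : ℕ → ℕ → ℝ≥0) (hbase : ∀ m, f 1 m ≤ g m)
    (hrec : ∀ (k m : ℕ), ∃ m₁ m₂ : ℕ, m₁ + m₂ = m ∧
      f (2 ^ (k + 1)) m ≤ f (2 ^ k) m₁ + f (2 ^ k) m₂ + g m) :
    ∀ (k m : ℕ), f (2 ^ k) m ≤ g m * (1 + (k : ℝ≥0)) := by
  intro k
  induction k with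
  | zero => intro m; simpa using hbase m
  | succ k ih =>
    intro m
    obtain ⟨m₁, m₂, hsum, hle⟩ := hrec k m
    have h1 := ih m₁
    have h2 := ih m₂
    have hgg : g m₁ + g m₂ ≤ g m := hsum ▸ hsuper m₁ m₂
    calc f (2 ^ (k + 1)) m ≤ f (2 ^ k) m₁ + f (2 ^ k) m₂ + g m := hle
      _ ≤ g m₁ * (1 + k) + g m₂ * (1 + k) + g m := by gcongr
      _ = (g m₁ + g m₂) * (1 + k) + g m := by ring
      _ ≤ g m * (1 + k) + g m := by gcongr
      _ = g m * (1 + (k + 1 : ℕ)) := by push_cast; ring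
end
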